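/- arXiv:1105.1726 — 5 statements merged into one kernel-verified Lean document; each statement's English description precedes it below -/
import Mathlib

section
/- Let x ∈ gl(n+1,ℂ) be strictly upper triangular with nonzero entries on the first superdiagonal (hence regular nilpotent). Then the centralizer of x in gl(n+1,ℂ) intersects gl(n,ℂ) (embedded as the upper-left n×n corner, with last row and column zero) trivially: z_{gl(n+1)}(x) ∩ gl(n,ℂ) = 0. -/
open Matrix

/-- The centralizer of a matrix, as a submodule of the matrix algebra. -/
noncomputable def matCentralizer {m : Type*} [Fintype m] [DecidableEq m] (x : Matrix m m ℂ) :
    Submodule ℂ (Matrix m m ℂ) where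
  carrier := {y | x * y = y * x}
  add_mem' := by
    intro a b ha hb
    simp only [Set.mem_setOf_eq] at *
    rw [Matrix.mul_add, Matrix.add_mul, ha, hb]
  zero_mem' := by simp
  smul_mem' := by
    intro c a ha
    simp only [Set.mem_setOf_eq] at *
    rw [Matrix.mul_smul, Matrix.smul_mul, ha]

/-- The upper-left `k × k` corner of an `m × m` matrix. -/
def ulCorner {m k : ℕ} (h : k ≤ m) (x : Matrix (Fin m) (Fin m) ℂ) :
    Matrix (Fin k) (Fin k) ℂ :=
  x.submatrix (Fin.castLE h) (Fin.castLE h)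

/-- The embedding of `gl(m)` into `gl(m+1)` with last row and column zero. -/
def matEmbed {m : ℕ} (z : Matrix (Fin m) (Fin m) ℂ) :
    Matrix (Fin (m + 1)) (Fin (m + 1)) ℂ :=
  Matrix.of fun a b =>
    if ha : (a : ℕ) < m then (if hb : (b : ℕ) < m then z ⟨a, ha⟩ ⟨b, hb⟩ else 0) else 0
/-! Since `x` is strictly upper triangular, row `i` of `x * y` only involves the rows of `y`
below row `i`, so descending induction on `i` reduces the claim to a single row `v` with
`v ᵥ* x = 0` and vanishing last entry. Once `v 0, …, v (j - 1)` vanish, entry `j + 1` of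
`v ᵥ* x` is `v j * x j (j + 1)`, so the nonzero superdiagonal kills `v` from left to right. -/

theorem Matrix.mul_row_eq_zero_of_rows_below {R m : Type*} [Semiring R] [Fintype m]
    [LinearOrder m] {x y : Matrix m m R} (hx : ∀ i j, j ≤ i → x i j = 0) {i : m}
    (hy : ∀ k, i < k → y k = 0) : (x * y) i = 0 := by
  rw [mul_apply_eq_vecMul, vecMul_eq_sum]
  refine Finset.sum_eq_zero fun k _ => ?_
  rcases le_or_gt k i with hki | hik
  · rw [hx i k hki, zero_smul]
  · rw [hy k hik, smul_zero]

theorem Matrix.eq_zero_of_vecMul_eq_zero_of_superdiag_ne_zero {R : Type*} [Semiring R]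
    [NoZeroDivisors R] {n : ℕ} {x : Matrix (Fin (n + 1)) (Fin (n + 1)) R}
    (hx : ∀ i j, j ≤ i → x i j = 0) (hsd : ∀ i : Fin n, x i.castSucc i.succ ≠ 0)
    {v : Fin (n + 1) → R} (hlast : v (Fin.last n) = 0) (h : v ᵥ* x = 0) : v = 0 := by
  have hinit : ∀ j : Fin n, v j.castSucc = 0 := by
    intro j
    induction j using WellFoundedLT.induction with | _ j ih =>
    have hcol : (v ᵥ* x) j.succ = v j.castSucc * x j.castSucc j.succ := by
      show ∑ k, v k * x k j.succ = _
      refine Finset.sum_eq_single_of_mem _ (Finset.mem_univ _) fun k _ hk => ?_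
      rcases lt_or_gt_of_ne hk with hlt | hgt
      · induction k using Fin.lastCases with
        | last => exact absurd hlt (not_lt_of_ge (Fin.le_last _))
        | cast k => rw [ih k (Fin.castSucc_lt_castSucc_iff.1 hlt), zero_mul]
      · rw [hx _ _ (Fin.castSucc_lt_iff_succ_le.1 hgt), mul_zero]
    rw [h, Pi.zero_apply, eq_comm, mul_eq_zero] at hcol
    exact hcol.resolve_right (hsd j)
  funext j
  induction j using Fin.lastCases with
  | last => exact hlast
  | cast j => exact hinit j

/-- If `x ∈ gl(n+1,ℂ)` is strictly upper triangular with nonzero entries on the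
first superdiagonal (hence regular nilpotent), then the centralizer of `x` in
`gl(n+1,ℂ)` meets the copy of `gl(n,ℂ)` (matrices with last row and column zero)
trivially. -/
theorem stmt4 (n : ℕ) (x : Matrix (Fin (n + 1)) (Fin (n + 1)) ℂ)
    (hupper : ∀ i j : Fin (n + 1), (j : ℕ) ≤ (i : ℕ) → x i j = 0)
    (hsd : ∀ i : Fin n, x i.castSucc i.succ ≠ 0) :
    ∀ y : Matrix (Fin (n + 1)) (Fin (n + 1)) ℂ,
      x * y = y * x →
      (∀ i : Fin (n + 1), y i (Fin.last n) = 0) →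
      (∀ i : Fin (n + 1), y (Fin.last n) i = 0) →
      y = 0 := by
  intro y hcomm hcol _
  funext i
  induction i using WellFoundedGT.induction with | _ i ih =>
  refine eq_zero_of_vecMul_eq_zero_of_superdiag_ne_zero hupper hsd (hcol i) ?_
  rw [← mul_apply_eq_vecMul, ← hcomm]
  exact mul_row_eq_zero_of_rows_below hupper ih
end

section
/- Let b be the Borel subalgebra of gl(n+1,ℂ) stabilizing the flag e₁ ⊂ ... ⊂ e_{i-1} ⊂ e_{n+1} ⊂ e_i ⊂ ... ⊂ e_n, where 1 < i < n+1 (position i of the flag is spanned by e_{n+1}). Let n = [b,b] be its nilradical and n_n its image under the projection to the upper-left n×n corner. Then the intersection z_{gl(n)}(n_n) ∩ z_{gl(n+1)}(n) is nonzero; in fact it contains the root space for the root ε₁ − ε_n, i.e., ℂ·E_{1,n}. -/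
open Matrix

/-- The entry-pattern (written `1`-indexed in the paper, here `0`-indexed) of the
Borel subalgebra of `gl(n+1,ℂ)` stabilizing the flag
`e₁ ⊂ … ⊂ e_{i-1} ⊂ e_{n+1} ⊂ e_i ⊂ … ⊂ e_n` (with `e_{n+1}` in position `i`):
the entry `(k,j)` is allowed precisely when
`(k ≤ j ≤ n ∧ k ≤ i-1)` or `(i ≤ k ≤ j ≤ n)` or `(k = n+1 ∧ j ≥ i)` or
`(j = n+1 ∧ k ≤ i-1)` or `k = j`. -/
def allowedEntry (n i : ℕ) (k j : Fin (n + 1)) : Prop :=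
  ((k : ℕ) ≤ (j : ℕ) ∧ (j : ℕ) < n ∧ (k : ℕ) + 2 ≤ i) ∨
  (i ≤ (k : ℕ) + 1 ∧ (k : ℕ) ≤ (j : ℕ) ∧ (j : ℕ) < n) ∨
  ((k : ℕ) = n ∧ i ≤ (j : ℕ) + 1) ∨
  ((j : ℕ) = n ∧ (k : ℕ) + 2 ≤ i) ∨
  k = j

/-- The Borel subalgebra of `gl(n+1,ℂ)` stabilizing the flag
`e₁ ⊂ … ⊂ e_{i-1} ⊂ e_{n+1} ⊂ e_i ⊂ … ⊂ e_n`. -/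
def borelSet (n i : ℕ) : Set (Matrix (Fin (n + 1)) (Fin (n + 1)) ℂ) :=
  {x | ∀ k j : Fin (n + 1), ¬ allowedEntry n i k j → x k j = 0}

/-- The nilradical `[b,b]` of the Borel subalgebra `borelSet n i`:
the allowed strictly off-diagonal part. -/
def nilradSet (n i : ℕ) : Set (Matrix (Fin (n + 1)) (Fin (n + 1)) ℂ) :=
  {x | (∀ k j : Fin (n + 1), ¬ allowedEntry n i k j → x k j = 0) ∧ ∀ k, x k k = 0}

/-! In the flag order `e₁` comes first (as `1 < i`) and `eₙ` last (as `i < n + 1`), so every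
element of the nilradical has zero first column and zero `n`-th row. Hence `E_{1,n}` annihilates
the nilradical from both sides, and its corner annihilates the corner of the nilradical. -/

namespace Matrix

variable {l l' m m' n n' α : Type*} [Fintype m'] [NonUnitalNonAssocSemiring α]

theorem single_submatrix_mul_submatrix_eq_zero [DecidableEq l] [DecidableEq m]
    (f : l' → l) (g : m' → m) (h : n' → n) {i : l} {j : m} (c : α)
    {x : Matrix m n α} (hx : ∀ b, x j b = 0) :
    (single i j c).submatrix f g * x.submatrix g h = 0 := by
  ext a b
  refine Finset.sum_eq_zero fun k _ => ?_
  by_cases hk : g k = j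
  · simp only [submatrix_apply, hk, hx, mul_zero]
  · simp only [submatrix_apply, single_apply_of_col_ne _ _ (Ne.symm hk), zero_mul]

theorem submatrix_mul_single_submatrix_eq_zero [DecidableEq m] [DecidableEq n]
    (f : l' → l) (g : m' → m) (h : n' → n) {i : m} {j : n} (c : α)
    {x : Matrix l m α} (hx : ∀ a, x a i = 0) :
    x.submatrix f g * (single i j c).submatrix g h = 0 := by
  ext a b
  refine Finset.sum_eq_zero fun k _ => ?_
  by_cases hk : g k = i
  · simp only [submatrix_apply, hk, hx, zero_mul]
  · simp only [submatrix_apply, single_apply_of_row_ne (Ne.symm hk), mul_zero]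

end Matrix

section Nilradical

variable {n i : ℕ}

theorem apply_eq_zero_of_mem_nilradSet {x : Matrix (Fin (n + 1)) (Fin (n + 1)) ℂ}
    (hx : x ∈ nilradSet n i) {k j : Fin (n + 1)} (hkj : allowedEntry n i k j → k = j) :
    x k j = 0 := by
  by_cases h : allowedEntry n i k j
  · rw [hkj h]
    exact hx.2 j
  · exact hx.1 k j h

theorem eq_of_allowedEntry_of_val_eq_pred (hi : i ≤ n) {k j : Fin (n + 1)}
    (hk : (k : ℕ) = n - 1) (h : allowedEntry n i k j) : k = j := by
  unfold allowedEntry at h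
  omega

theorem eq_of_allowedEntry_zero_right (hi : 1 < i) {k : Fin (n + 1)}
    (h : allowedEntry n i k 0) : k = 0 := by
  have h0 : ((0 : Fin (n + 1)) : ℕ) = 0 := rfl
  unfold allowedEntry at h
  omega

end Nilradical

/-- Let `b` be the Borel subalgebra of `gl(n+1,ℂ)` stabilizing the flag
`e₁ ⊂ … ⊂ e_{i-1} ⊂ e_{n+1} ⊂ e_i ⊂ … ⊂ e_n` with `1 < i < n+1`, with
nilradical `𝔫`, and let `𝔫ₙ` be the projection of `𝔫` to the upper-left
`n × n` corner.  Then `z_{gl(n)}(𝔫ₙ) ∩ z_{gl(n+1)}(𝔫)` is nonzero: it contains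
the matrix unit `E_{1,n}` (zero-indexed `E_{0,n-1}`), which is a nonzero element
of the embedded `gl(n,ℂ)` centralizing `𝔫`, whose corner centralizes `𝔫ₙ`. -/
theorem stmt6 (n i : ℕ) (h1 : 1 < i) (h2 : i < n + 1) :
    Matrix.single (0 : Fin (n + 1)) (⟨n - 1, by omega⟩ : Fin (n + 1)) (1 : ℂ) ≠ 0 ∧
    (∀ j : Fin (n + 1),
      Matrix.single (0 : Fin (n + 1)) (⟨n - 1, by omega⟩ : Fin (n + 1)) (1 : ℂ) j (Fin.last n) = 0 ∧
      Matrix.single (0 : Fin (n + 1)) (⟨n - 1, by omega⟩ : Fin (n + 1)) (1 : ℂ) (Fin.last n) j = 0) ∧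
    (∀ x ∈ nilradSet n i,
      Matrix.single (0 : Fin (n + 1)) (⟨n - 1, by omega⟩ : Fin (n + 1)) (1 : ℂ) * x =
        x * Matrix.single (0 : Fin (n + 1)) (⟨n - 1, by omega⟩ : Fin (n + 1)) (1 : ℂ)) ∧
    (∀ x ∈ nilradSet n i,
      ulCorner (Nat.le_succ n) (Matrix.single (0 : Fin (n + 1)) (⟨n - 1, by omega⟩ : Fin (n + 1)) (1 : ℂ)) *
          ulCorner (Nat.le_succ n) x =
        ulCorner (Nat.le_succ n) x *
          ulCorner (Nat.le_succ n) (Matrix.single (0 : Fin (n + 1)) (⟨n - 1, by omega⟩ : Fin (n + 1)) (1 : ℂ))) := by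
  set K : Fin (n + 1) := ⟨n - 1, by omega⟩
  have hrow : ∀ x ∈ nilradSet n i, ∀ b, x K b = 0 := fun x hx _ =>
    apply_eq_zero_of_mem_nilradSet hx (eq_of_allowedEntry_of_val_eq_pred (by omega) rfl)
  have hcol : ∀ x ∈ nilradSet n i, ∀ a, x a 0 = 0 := fun x hx _ =>
    apply_eq_zero_of_mem_nilradSet hx (eq_of_allowedEntry_zero_right h1)
  refine ⟨fun h => one_ne_zero (α := ℂ) (by simpa using congrFun (congrFun h 0) K),
    fun j => ⟨?_, ?_⟩, fun x hx => ?_, fun x hx => ?_⟩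
  · exact single_apply_of_col_ne _ _ (Fin.ne_of_val_ne (by simp only [K, Fin.val_last]; omega)) _
  · exact single_apply_of_row_ne
      (Fin.ne_of_val_ne (by simp only [Fin.val_zero, Fin.val_last]; omega)) _ _ _
  · simpa using (single_submatrix_mul_submatrix_eq_zero id id id 1 (hrow x hx)).trans
      (submatrix_mul_single_submatrix_eq_zero id id id 1 (hcol x hx)).symm
  · exact (single_submatrix_mul_submatrix_eq_zero _ _ _ 1 (hrow x hx)).trans
      (submatrix_mul_single_submatrix_eq_zero _ _ _ 1 (hcol x hx)).symm
end

section
/- Let g ∈ GL(n+1,ℂ) be the matrix with 1's on the diagonal, a 1 in entry (n+1,1), and 0 elsewhere. Let x = g u g⁻¹ where u is strictly upper triangular with all first superdiagonal entries a_{i,i+1} nonzero. Let y be the matrix obtained from x by setting the last column and last row entries to their block-diagonal projection (i.e., y_{k,n+1} = 0 and y_{n+1,j} = 0 for k,j ≤ n, keeping y_{n+1,n+1} = x_{n+1,n+1} and y_n = x_n). Then the upper-left n×n corner of y has determinant (-1)^n ∏_{i=1}^{n} a_{i,i+1} ≠ 0; in particular y is not nilpotent. -/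
open Matrix

/-!
The matrix `g` is the transvection `1 + E_{n+1,1}`, so `g⁻¹ = 1 - E_{n+1,1}`. Multiplying by `g` on
the left only changes the last row, and by `g⁻¹` on the right only the first column, so on the
first `n` rows `x` agrees with `u` except that its first column is `u_{·,1} - u_{·,n+1} = -u_{·,n+1}`.
Rotating the columns of the corner of `y` cyclically (a permutation of sign `(-1)^(n-1)`) thus gives
an upper triangular matrix with diagonal `a_{1,2}, …, a_{n-1,n}, -a_{n,n+1}`.

Since the last column of `y` vanishes off the diagonal, the corner of `y ^ k` is the `k`-th power
of the corner of `y`; a nilpotent `y` would therefore have a corner of determinant zero.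
-/

namespace Matrix

variable {R : Type*} [CommRing R]

theorem det_eq_sign_mul_prod_of_isUpperTriangular_submatrix {n : Type*} [Fintype n]
    [LinearOrder n] (B : Matrix n n R) (σ : Equiv.Perm n)
    (h : (B.submatrix id σ).IsUpperTriangular) :
    B.det = Equiv.Perm.sign σ * ∏ i, B i (σ i) := by
  have := det_of_isUpperTriangular h
  rw [det_permute'] at this
  rw [show ∏ i, B i (σ i) = ∏ i, B.submatrix id σ i i from rfl, ← this, ← mul_assoc,
    ← Int.cast_mul, ← Units.val_mul, Int.units_mul_self, Units.val_one, Int.cast_one, one_mul]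

theorem det_of_succ_columns_strictUpperTriangular {m : ℕ}
    (B : Matrix (Fin (m + 1)) (Fin (m + 1)) R) (hB : ∀ i j, j ≠ 0 → j ≤ i → B i j = 0) :
    B.det = (-1) ^ m * ((∏ i : Fin m, B i.castSucc i.succ) * B (Fin.last m) 0) := by
  have hrot (i : Fin m) : finRotate (m + 1) i.castSucc = i.succ := by simp
  rw [det_eq_sign_mul_prod_of_isUpperTriangular_submatrix B (finRotate (m + 1)), sign_finRotate,
    Fin.prod_univ_castSucc, finRotate_last]
  · simp [hrot]
  · intro i j hji
    obtain ⟨j, rfl⟩ := Fin.exists_castSucc_eq.mpr (Fin.ne_last_of_lt hji)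
    simp only [submatrix_apply, id, hrot]
    exact hB _ _ (Fin.succ_ne_zero j) (Fin.castSucc_lt_iff_succ_le.mp hji)

theorem submatrix_castSucc_mul {m : ℕ} (M N : Matrix (Fin (m + 1)) (Fin (m + 1)) R)
    (hM : ∀ i : Fin m, M i.castSucc (Fin.last m) = 0) :
    (M * N).submatrix Fin.castSucc Fin.castSucc =
      M.submatrix Fin.castSucc Fin.castSucc * N.submatrix Fin.castSucc Fin.castSucc := by
  ext i j
  simp [mul_apply, Fin.sum_univ_castSucc, hM]

theorem submatrix_castSucc_pow {m : ℕ} (M : Matrix (Fin (m + 1)) (Fin (m + 1)) R)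
    (hM : ∀ i : Fin m, M i.castSucc (Fin.last m) = 0) (k : ℕ) :
    (M ^ k).submatrix Fin.castSucc Fin.castSucc = M.submatrix Fin.castSucc Fin.castSucc ^ k := by
  induction k with
  | zero => rw [pow_zero, pow_zero, submatrix_one _ (Fin.castSucc_injective m)]
  | succ k ih => rw [pow_succ', submatrix_castSucc_mul _ _ hM, ih, pow_succ']

theorem IsNilpotent.submatrix_castSucc {m : ℕ} {M : Matrix (Fin (m + 1)) (Fin (m + 1)) R}
    (hM : ∀ i : Fin m, M i.castSucc (Fin.last m) = 0) (hnil : IsNilpotent M) :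
    IsNilpotent (M.submatrix Fin.castSucc Fin.castSucc) := by
  obtain ⟨k, hk⟩ := hnil
  exact ⟨k, by rw [← submatrix_castSucc_pow M hM, hk]; rfl⟩

theorem det_eq_zero_of_isNilpotent {n : Type*} [Fintype n] [DecidableEq n] [Nonempty n]
    [IsReduced R] {A : Matrix n n R} (hA : IsNilpotent A) : A.det = 0 := by
  obtain ⟨k, hk⟩ := hA
  exact IsNilpotent.eq_zero ⟨k, by rw [← det_pow, hk, det_zero]⟩

theorem transvection_mul_mul_transvection_neg_apply {n : Type*} [Fintype n] [DecidableEq n]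
    {i j a : n} (b : n) (ha : a ≠ i) (c : R) (M : Matrix n n R) :
    (transvection i j c * M * transvection i j (-c)) a b =
      M a b - if b = j then c * M a i else 0 := by
  by_cases hb : b = j
  · subst hb; simp [ha, sub_eq_add_neg]
  · simp [ha, hb]

theorem inv_transvection {n : Type*} [Fintype n] [DecidableEq n] {i j : n} (h : i ≠ j) (c : R) :
    (transvection i j c)⁻¹ = transvection i j (-c) :=
  inv_eq_right_inv <| by
    rw [transvection_mul_transvection_same i j h, add_neg_cancel, transvection_zero]

end Matrix

/-- Let `g ∈ GL(n+1,ℂ)` have `1`s on the diagonal, a `1` in entry `(n+1,1)` and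
`0` elsewhere, and let `x = g u g⁻¹` with `u` strictly upper triangular with all
first superdiagonal entries nonzero.  Let `y` be the block diagonal part of `x`
(last row and column zeroed out except the `(n+1,n+1)` entry).  Then the
upper-left `n × n` corner of `y` has determinant `(-1)ⁿ ∏ u_{i,i+1} ≠ 0`; in
particular `y` is not nilpotent. -/
theorem stmt9 (n : ℕ) (hn : 0 < n)
    (u : Matrix (Fin (n + 1)) (Fin (n + 1)) ℂ)
    (hupper : ∀ i j : Fin (n + 1), (j : ℕ) ≤ (i : ℕ) → u i j = 0)
    (hsd : ∀ i : Fin n, u i.castSucc i.succ ≠ 0)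
    (g x y : Matrix (Fin (n + 1)) (Fin (n + 1)) ℂ)
    (hg : g = 1 + Matrix.single (Fin.last n) (0 : Fin (n + 1)) (1 : ℂ))
    (hx : x = g * u * g⁻¹)
    (hy : y = Matrix.of fun k j =>
      if k = Fin.last n ∧ j ≠ Fin.last n then 0
      else if j = Fin.last n ∧ k ≠ Fin.last n then 0
      else x k j) :
    (ulCorner (Nat.le_succ n) y).det = (-1) ^ n * ∏ i : Fin n, u i.castSucc i.succ ∧
    (ulCorner (Nat.le_succ n) y).det ≠ 0 ∧
    ¬ IsNilpotent y := by
  obtain ⟨m, rfl⟩ := Nat.exists_eq_add_one_of_ne_zero hn.ne'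
  replace hg : g = transvection (Fin.last (m + 1)) 0 1 := hg
  have hx_apply (i : Fin (m + 1)) (b : Fin (m + 2)) :
      x i.castSucc b = u i.castSucc b - if b = 0 then u i.castSucc (Fin.last (m + 1)) else 0 := by
    rw [hx, hg, inv_transvection (Fin.last_pos.ne'),
      transvection_mul_mul_transvection_neg_apply _ (Fin.castSucc_ne_last i), one_mul]
  have hcorner (i j : Fin (m + 1)) : ulCorner (Nat.le_succ (m + 1)) y i j =
      u i.castSucc j.castSucc - if j = 0 then u i.castSucc (Fin.last (m + 1)) else 0 := by
    change y i.castSucc j.castSucc = _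
    simp [hy, hx_apply, Fin.castSucc_ne_last]
  have hdet : (ulCorner (Nat.le_succ (m + 1)) y).det =
      (-1) ^ (m + 1) * ∏ i : Fin (m + 1), u i.castSucc i.succ := by
    rw [det_of_succ_columns_strictUpperTriangular _ fun i j hj hji => by
      rw [hcorner, if_neg hj, sub_zero]; exact hupper _ _ hji]
    have hu0 : u (Fin.last m).castSucc 0 = 0 := hupper _ _ (Nat.zero_le _)
    simp [hcorner, hu0, Fin.prod_univ_castSucc (n := m), pow_succ]
  have hdet_ne : (ulCorner (Nat.le_succ (m + 1)) y).det ≠ 0 := by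
    rw [hdet]
    exact mul_ne_zero (pow_ne_zero _ (neg_ne_zero.mpr one_ne_zero))
      (Finset.prod_ne_zero_iff.mpr fun i _ => hsd i)
  refine ⟨hdet, hdet_ne, fun hnil => hdet_ne (det_eq_zero_of_isNilpotent ?_)⟩
  exact hnil.submatrix_castSucc fun i => by simp [hy, Fin.castSucc_ne_last]
end

section
/- Let v = w u_α σ ∈ GL(n+1,ℂ), where w is the permutation matrix of the cycle (n+1, n, ..., i), σ is the permutation matrix of the cycle (i+1, i+2, ..., j), and u_α is the matrix acting by e_i ↦ e_i + e_{i+1}, e_{i+1} ↦ -e_i + e_{i+1}, e_k ↦ e_k otherwise, for 1 ≤ i < j ≤ n+1. Let θ be conjugation by c = diag(1,...,1,-1). Then v⁻¹ θ(v) = τ_{ij} t, where τ_{ij} is the permutation matrix of the transposition (i j) and t is a diagonal matrix with t² = I. -/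
open Matrix

/-!
Conjugation by `c` flips the sign of the last coordinate, and `c v = v τ_{ij}` follows by moving
this sign flip to the right through the three factors of `v`. Through the permutation matrix `w` it
becomes the sign flip of coordinate `i`. Since `u_α` is `!![1, -1; 1, 1]` on the `(i, i+1)` block,
negating its row `i` amounts to exchanging its columns `i` and `i+1`. Finally the cycle `σ` fixes
`i` and sends `j` to `i+1`, so it conjugates `(i i+1)` into `(i j)`. As `c² = 1`, this gives
`v⁻¹ θ(v) = τ_{ij} c`.
-/

section

open Equiv

lemma Fin.val_cycleIcc {N : ℕ} [NeZero N] {p q : Fin N} (k : Fin N) :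
    (cycleIcc p q k : ℕ) = if k < p ∨ q < k then (k : ℕ) else if k = q then (p : ℕ) else k + 1 := by
  rcases lt_or_ge k p with hkp | hpk
  · simp [Fin.cycleIcc_of_lt hkp, hkp]
  rcases lt_or_ge q k with hqk | hkq
  · simp [Fin.cycleIcc_of_gt hqk, hqk]
  rw [Fin.cycleIcc_of_le_of_le hpk hkq, if_neg (not_or.mpr ⟨hpk.not_gt, hkq.not_gt⟩)]
  split_ifs with hk
  · rfl
  · have hkq' : k < q := lt_of_le_of_ne hkq hk
    exact Fin.val_add_one_of_lt' (by omega)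

namespace Matrix

/- Indices are `0`-based, so the paper's `e_i` is `e ⟨i - 1, _⟩`. The `1`s of `ρ.permMatrix` sit
at `(a, ρ a)`: it sends `e_b` to `e_{ρ⁻¹ b}`. -/
section PermMatrixEntries

variable {R : Type*} [Zero R] [One R]

lemma permMatrix_swap {ι : Type*} [DecidableEq ι] (p q : ι) :
    (Equiv.swap p q).permMatrix R = of fun a b : ι =>
      if (a = p ∧ b = q) ∨ (a = q ∧ b = p) ∨ (a = b ∧ a ≠ p ∧ a ≠ q) then (1 : R) else 0 := by
  ext a b
  simp only [PEquiv.toMatrix_apply, toPEquiv_apply, Option.mem_def, Option.some.injEq, of_apply,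
    swap_apply_def]
  congr 1
  apply propext
  grind

lemma permMatrix_cycleIcc_last {n : ℕ} (k : ℕ) (hk : k < n + 1) :
    (Fin.cycleIcc ⟨k, hk⟩ (Fin.last n)).permMatrix R = of fun a b : Fin (n + 1) =>
      if ((b : ℕ) < k ∧ a = b) ∨ ((b : ℕ) = k ∧ (a : ℕ) = n) ∨
         (k < (b : ℕ) ∧ (a : ℕ) + 1 = (b : ℕ)) then (1 : R) else 0 := by
  ext a b
  have := a.isLt
  simp only [PEquiv.toMatrix_apply, toPEquiv_apply, Option.mem_def, Option.some.injEq, of_apply,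
    Fin.ext_iff, Fin.val_cycleIcc, Fin.lt_def, Fin.val_last]
  congr 1
  apply propext
  split_ifs <;> omega

lemma permMatrix_inv_cycleIcc {n i j : ℕ} (h1 : 1 ≤ i) (h2 : i < j) (h3 : j ≤ n + 1) :
    (Fin.cycleIcc (⟨i, h2.trans_le h3⟩ : Fin (n + 1))
      ⟨j - 1, Nat.sub_one_lt_of_le (Nat.zero_lt_of_lt h2) h3⟩)⁻¹.permMatrix R =
      of fun a b : Fin (n + 1) =>
      if (((b : ℕ) ≤ i - 1 ∨ j ≤ (b : ℕ)) ∧ a = b) ∨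
         (i - 1 < (b : ℕ) ∧ (b : ℕ) + 1 < j ∧ (a : ℕ) = (b : ℕ) + 1) ∨
         ((b : ℕ) = j - 1 ∧ (a : ℕ) = i) then (1 : R) else 0 := by
  ext a b
  simp only [PEquiv.toMatrix_apply, toPEquiv_apply, Option.mem_def, Option.some.injEq, of_apply,
    Perm.inv_eq_iff_eq, Fin.ext_iff, Fin.val_cycleIcc, Fin.lt_def]
  congr 1
  apply propext
  split_ifs <;> omega

end PermMatrixEntries

variable {ι R : Type*} [DecidableEq ι] [Fintype ι]

def signFlip [Ring R] (x : ι) : Matrix ι ι R :=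
  diagonal fun k => if k = x then -1 else 1

lemma signFlip_mul_self [Ring R] (x : ι) : signFlip x * signFlip x = (1 : Matrix ι ι R) := by
  rw [signFlip, diagonal_mul_diagonal, ← diagonal_one]
  congr 1
  funext k
  split_ifs <;> simp

lemma signFlip_mul_permMatrix [Ring R] (x : ι) (ρ : Perm ι) :
    signFlip x * ρ.permMatrix R = ρ.permMatrix R * signFlip (ρ x) := by
  ext a b
  simp only [signFlip, mul_diagonal, diagonal_mul, PEquiv.toMatrix_apply, toPEquiv_apply,
    Option.mem_def, Option.some.injEq, ite_mul, one_mul, zero_mul, mul_ite, mul_one, mul_zero]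
  split_ifs <;> simp_all

lemma permMatrix_swap_mul [Semiring R] (ρ : Perm ι) (p q : ι) :
    (Equiv.swap p q).permMatrix R * ρ.permMatrix R =
      ρ.permMatrix R * (Equiv.swap (ρ p) (ρ q)).permMatrix R := by
  rw [← permMatrix_mul, ← permMatrix_mul, swap_apply_apply, inv_mul_cancel_right]

lemma isUnit_permMatrix [Semiring R] (ρ : Perm ι) : IsUnit (ρ.permMatrix R) := by
  simpa using (Group.isUnit ρ⁻¹).map (permMatrixHom (n := ι) (R := R))

lemma signFlip_mul_cayley [CommRing R] {p q : ι} (hpq : p ≠ q) :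
    signFlip p * (1 + single q p (1 : R) - single p q 1) =
      (1 + single q p (1 : R) - single p q 1) * (Equiv.swap p q).permMatrix R := by
  ext a b
  rw [signFlip, diagonal_mul, PEquiv.mul_toMatrix_toPEquiv]
  simp only [sub_apply, add_apply, one_apply, single_apply, ite_mul, neg_mul, one_mul, neg_sub,
    symm_swap, submatrix_apply, id_eq]
  grind

lemma isUnit_cayley [Field R] [CharZero R] {p q : ι} (hpq : p ≠ q) :
    IsUnit (1 + single q p (1 : R) - single p q 1) := by
  have hinv : (1 + single q p (1 : R) - single p q 1) *
      (1 - (2⁻¹ : R) • (single q p 1 - single p q 1) - (2⁻¹ : R) • (single p p 1 + single q q 1))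
        = 1 := by
    simp only [Matrix.mul_sub, Matrix.sub_mul, Matrix.mul_add, Matrix.add_mul, Matrix.mul_smul,
      Matrix.one_mul, single_mul_single_same, single_mul_single_of_ne _ _ _ _ hpq,
      single_mul_single_of_ne _ _ _ _ hpq.symm, mul_one]
    module
  exact (isUnit_iff_isUnit_det _).mpr (isUnit_det_of_right_inverse hinv)

end Matrix

end

/-- Let `v = w u_α σ ∈ GL(n+1,ℂ)` where (in `1`-indexed notation) `w` is the
permutation matrix of the cycle `(n+1, n, …, i)`, `σ` is the permutation matrix
of the cycle `(i+1, i+2, …, j)` and `u_α` is the Cayley transform matrix acting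
by `e_i ↦ e_i + e_{i+1}`, `e_{i+1} ↦ -e_i + e_{i+1}`, `e_k ↦ e_k` otherwise,
for `1 ≤ i < j ≤ n+1`.  Let `θ` be conjugation by `c = diag(1,…,1,-1)`.  Then
`v⁻¹ θ(v) = τ_{ij} t` where `τ_{ij}` is the permutation matrix of the
transposition `(i j)` and `t` is a diagonal matrix with `t² = I`. -/
theorem stmt11 (n i j : ℕ) (h1 : 1 ≤ i) (h2 : i < j) (h3 : j ≤ n + 1)
    (w uα σ v c τ : Matrix (Fin (n + 1)) (Fin (n + 1)) ℂ)
    (hw : w = Matrix.of fun a b : Fin (n + 1) =>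
      if ((b : ℕ) < i - 1 ∧ a = b) ∨ ((b : ℕ) = i - 1 ∧ (a : ℕ) = n) ∨
         (i - 1 < (b : ℕ) ∧ (a : ℕ) + 1 = (b : ℕ)) then (1 : ℂ) else 0)
    (hσ : σ = Matrix.of fun a b : Fin (n + 1) =>
      if (((b : ℕ) ≤ i - 1 ∨ j ≤ (b : ℕ)) ∧ a = b) ∨
         (i - 1 < (b : ℕ) ∧ (b : ℕ) + 1 < j ∧ (a : ℕ) = (b : ℕ) + 1) ∨
         ((b : ℕ) = j - 1 ∧ (a : ℕ) = i) then (1 : ℂ) else 0)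
    (huα : uα = 1 + Matrix.single (⟨i, by omega⟩ : Fin (n + 1)) (⟨i - 1, by omega⟩ : Fin (n + 1)) (1 : ℂ)
        - Matrix.single (⟨i - 1, by omega⟩ : Fin (n + 1)) (⟨i, by omega⟩ : Fin (n + 1)) (1 : ℂ))
    (hv : v = w * uα * σ)
    (hc : c = Matrix.diagonal (fun a : Fin (n + 1) => if a = Fin.last n then (-1 : ℂ) else 1))
    (hτ : τ = Matrix.of fun a b : Fin (n + 1) =>
      if (a = ⟨i - 1, by omega⟩ ∧ b = ⟨j - 1, by omega⟩) ∨
         (a = ⟨j - 1, by omega⟩ ∧ b = ⟨i - 1, by omega⟩) ∨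
         (a = b ∧ a ≠ ⟨i - 1, by omega⟩ ∧ a ≠ ⟨j - 1, by omega⟩) then (1 : ℂ) else 0) :
    ∃ t : Fin (n + 1) → ℂ, (∀ a, t a ^ 2 = 1) ∧
      v⁻¹ * (c * v * c⁻¹) = τ * Matrix.diagonal t := by
  set p : Fin (n + 1) := ⟨i - 1, by omega⟩
  set q : Fin (n + 1) := ⟨i, by omega⟩
  set r : Fin (n + 1) := ⟨j - 1, by omega⟩
  have hpq : p ≠ q := Fin.ne_of_val_ne (by dsimp only [p, q]; omega)
  set ρw := Fin.cycleIcc p (Fin.last n)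
  set ρσ := (Fin.cycleIcc q r)⁻¹
  set u := 1 + single q p (1 : ℂ) - single p q 1
  have hw' : w = ρw.permMatrix ℂ := hw.trans (permMatrix_cycleIcc_last _ _).symm
  have hσ' : σ = ρσ.permMatrix ℂ := hσ.trans (permMatrix_inv_cycleIcc h1 h2 h3).symm
  have hτ' : τ = (Equiv.swap p r).permMatrix ℂ := hτ.trans (permMatrix_swap p r).symm
  have hc' : c = signFlip (Fin.last n) := hc
  have hρw : ρw (Fin.last n) = p := Fin.cycleIcc_of_last (Fin.le_last p)
  have hρσp : ρσ p = p :=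
    Equiv.Perm.inv_eq_iff_eq.mpr (Fin.cycleIcc_of_lt (Fin.mk_lt_mk.mpr (by omega))).symm
  have hρσq : ρσ q = r :=
    Equiv.Perm.inv_eq_iff_eq.mpr (Fin.cycleIcc_of_last (Fin.mk_le_mk.mpr (by omega))).symm
  have hcv : c * v = v * τ := calc
    c * v = signFlip (Fin.last n) * ρw.permMatrix ℂ * u * ρσ.permMatrix ℂ := by
      rw [hc', hv, hw', hσ', huα]; simp only [Matrix.mul_assoc]
    _ = ρw.permMatrix ℂ * (u * (Equiv.swap p q).permMatrix ℂ) * ρσ.permMatrix ℂ := by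
      rw [signFlip_mul_permMatrix, hρw, Matrix.mul_assoc _ (signFlip p), signFlip_mul_cayley hpq]
    _ = ρw.permMatrix ℂ * u * ρσ.permMatrix ℂ * (Equiv.swap p r).permMatrix ℂ := by
      simp only [Matrix.mul_assoc, permMatrix_swap_mul, hρσp, hρσq]
    _ = v * τ := by rw [hv, hw', hσ', hτ', huα]
  have hv_det : IsUnit v.det := by
    rw [← isUnit_iff_isUnit_det, hv, hw', hσ', huα]
    exact ((isUnit_permMatrix _).mul (isUnit_cayley hpq)).mul (isUnit_permMatrix _)
  refine ⟨fun a => if a = Fin.last n then -1 else 1,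
    fun _ => by dsimp only; split_ifs <;> norm_num, ?_⟩
  calc v⁻¹ * (c * v * c⁻¹) = v⁻¹ * (v * τ * c) := by
        rw [hcv, inv_eq_right_inv (hc' ▸ signFlip_mul_self (Fin.last n) : c * c = 1)]
    _ = τ * c := by
        rw [Matrix.mul_assoc v, ← Matrix.mul_assoc, nonsing_inv_mul _ hv_det, Matrix.one_mul]
    _ = τ * diagonal _ := by rw [hc]
end

section
/- Let x ∈ gl(n+1,ℂ) be a regular nilpotent element contained in the upper triangular Borel b₊. Then x_n ∈ gl(n,ℂ) is regular nilpotent and z_{gl(n)}(x_n) ∩ z_{gl(n+1)}(x) = 0. -/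
/-!
A strictly upper triangular `x ∈ gl(n+1)` is regular exactly when `x ^ n ≠ 0`. Indeed, if
`x ^ d = 0` with `d ≤ n` minimal, choose `i₀, j₀` with `(x ^ (d-1)) i₀ j₀ ≠ 0` and `w ≠ 0` with
`(x ^ k w) i₀ = 0` for `k < d`; the matrices `∑ xⁱ (u e_{i₀}ᵀ) x^(d-1-i)` commute with `x`,
depend injectively on the vector `u` and all kill `w`, so together with `1` they span an
`(n+2)`-dimensional subspace of the centralizer.

When `x ^ n ≠ 0`, its only nonzero entry is the top-right one, so the last basis vector is
cyclic for `x`, and `y ↦ y e_last` is injective on the centralizer of `x`. This kills the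
embedding of any `z` commuting with `x`, whose last column vanishes. The corner `xₙ` inherits
the cyclic vector `e_{n-1}`, so its centralizer is spanned by its `n` powers.
-/

open Matrix

open Finset

theorem commute_sum_pow_mul_mul_pow {A : Type*} [Ring A] {x : A} {d : ℕ} (hx : x ^ d = 0)
    (M : A) : Commute x (∑ i ∈ range d, x ^ i * M * x ^ (d - 1 - i)) := by
  -- the sum is a geometric sum in the commuting operators `M ↦ x * M` and `M ↦ M * x`
  have h := congrArg (· M) ((LinearMap.commute_mulLeft_right (R := ℕ) x x).mul_geom_sum₂ d)
  simp only [LinearMap.pow_mulLeft, LinearMap.pow_mulRight, hx] at h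
  simp only [LinearMap.sub_apply, Module.End.mul_apply, LinearMap.sum_apply, map_sum,
    LinearMap.mulLeft_apply, LinearMap.mulRight_apply] at h
  rw [zero_mul, mul_zero, sub_zero, sum_sub_distrib] at h
  rw [Commute, SemiconjBy, mul_sum, sum_mul]
  simpa only [mul_assoc] using sub_eq_zero.1 h

theorem isUnit_sum_smul_pow {R A : Type*} [CommRing R] [Ring A] [Algebra R A] {x : A}
    (hx : IsNilpotent x) {c : ℕ → R} (hc : IsUnit (c 0)) {d : ℕ} (hd : d ≠ 0) :
    IsUnit (∑ i ∈ range d, c i • x ^ i) := by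
  obtain ⟨d, rfl⟩ := Nat.exists_eq_succ_of_ne_zero hd
  rw [sum_range_succ', pow_zero, ← Algebra.algebraMap_eq_smul_one]
  refine IsNilpotent.isUnit_add_right_of_commute ?_ (hc.map _)
    (Algebra.commutes _ _).symm
  refine Commute.isNilpotent_sum (fun i _ => (hx.pow_succ i).smul _) fun i j _ _ => ?_
  exact ((Commute.pow_pow_self x _ _).smul_left _).smul_right _

section Field

variable {K ι : Type*} [Field K] [Fintype ι] [DecidableEq ι] {x : Matrix ι ι K}

theorem linearIndependent_pow_mulVec {v : ι → K} {d : ℕ} (hxd : x ^ d = 0)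
    (hv : x ^ (d - 1) *ᵥ v ≠ 0) : LinearIndependent K fun k : Fin d => x ^ (k : ℕ) *ᵥ v := by
  rw [Fintype.linearIndependent_iff]
  intro g hg
  by_contra! hne
  obtain ⟨i, hi, hmin⟩ := WellFounded.has_min wellFounded_lt {k | g k ≠ 0} hne
  -- multiplying by `x ^ (d - 1 - i)` kills every term but the `i`-th
  have h := congrArg (x ^ (d - 1 - i : ℕ) *ᵥ ·) hg
  simp only [Matrix.mulVec_sum, Matrix.mulVec_smul, Matrix.mulVec_mulVec, ← pow_add,
    Matrix.mulVec_zero] at h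
  rw [sum_eq_single i] at h
  · rw [show d - 1 - i + i = d - 1 by omega] at h
    exact hi ((smul_eq_zero.1 h).resolve_right hv)
  · intro k _ hki
    rcases lt_or_gt_of_ne hki with hk | hk
    · rw [not_ne_iff.1 (fun h => hmin k h hk), zero_smul]
    · rw [pow_eq_zero_of_le (by omega) hxd, Matrix.zero_mulVec, smul_zero]
  · simp

variable (x) in
theorem exists_ne_zero_forall_pow_mulVec_apply_eq_zero (i₀ : ι) {d : ℕ}
    (hd : d < Fintype.card ι) : ∃ w ≠ 0, ∀ k < d, (x ^ k *ᵥ w) i₀ = 0 := by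
  let T : (ι → K) →ₗ[K] Fin d → K :=
    LinearMap.pi fun k => LinearMap.proj i₀ ∘ₗ (x ^ (k : ℕ)).mulVecLin
  obtain ⟨w, hw, hw0⟩ :=
    (Submodule.ne_bot_iff _).1 (LinearMap.ker_ne_bot_of_finrank_lt (f := T) (by simpa using hd))
  exact ⟨w, hw0, fun k hk => congrFun (LinearMap.mem_ker.1 hw) ⟨k, hk⟩⟩

variable (x) in
def geomSumRankOne (c : ℕ) (i₀ : ι) : (ι → K) →ₗ[K] Matrix ι ι K where
  toFun u := ∑ i ∈ range c, x ^ i * Matrix.vecMulVec u (Pi.single i₀ 1) * x ^ (c - 1 - i)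
  map_add' u u' := by simp [Matrix.add_vecMulVec, mul_add, add_mul, sum_add_distrib]
  map_smul' a u := by simp [Matrix.smul_vecMulVec, smul_sum]

theorem geomSumRankOne_mulVec (c : ℕ) (i₀ : ι) (u v : ι → K) :
    geomSumRankOne x c i₀ u *ᵥ v = ∑ i ∈ range c, (x ^ (c - 1 - i) *ᵥ v) i₀ • (x ^ i *ᵥ u) := by
  simp [geomSumRankOne, Matrix.sum_mulVec, ← Matrix.mulVec_mulVec, Matrix.vecMulVec_mulVec,
    Matrix.mulVec_smul]

theorem commute_geomSumRankOne {c : ℕ} (hxc : x ^ c = 0) (i₀ : ι) (u : ι → K) :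
    Commute x (geomSumRankOne x c i₀ u) :=
  commute_sum_pow_mul_mul_pow hxc _

theorem geomSumRankOne_injective (hx : IsNilpotent x) {c : ℕ} (hc : c ≠ 0) {i₀ j₀ : ι}
    (hij : (x ^ (c - 1)) i₀ j₀ ≠ 0) : Function.Injective (geomSumRankOne x c i₀) := by
  rw [← LinearMap.ker_eq_bot, LinearMap.ker_eq_bot']
  intro u hu
  -- evaluating at `Pi.single j₀ 1` applies a polynomial in `x` with nonzero constant term
  set N := ∑ i ∈ range c, (x ^ (c - 1 - i)) i₀ j₀ • x ^ i
  have hN : IsUnit N := isUnit_sum_smul_pow hx (by simpa using hij) hc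
  have hNu : N *ᵥ u = geomSumRankOne x c i₀ u *ᵥ Pi.single j₀ 1 := by
    rw [geomSumRankOne_mulVec]
    simp [N, Matrix.sum_mulVec, Matrix.smul_mulVec]
  refine Matrix.mulVec_injective_iff_isUnit.2 hN ?_
  rw [hNu, hu, Matrix.zero_mulVec, Matrix.mulVec_zero]

end Field

section Centralizer

variable {ι : Type*} [Fintype ι] [DecidableEq ι] {x : Matrix ι ι ℂ}

theorem card_lt_finrank_matCentralizer {d : ℕ} (hxd : x ^ d = 0) (hd : d < Fintype.card ι) :
    Fintype.card ι < Module.finrank ℂ (matCentralizer x) := by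
  have : Nonempty ι := Fintype.card_pos_iff.1 (by omega)
  have hx : IsNilpotent x := ⟨d, hxd⟩
  set c := nilpotencyClass x
  have hcd : c < Fintype.card ι := (Nat.sInf_le hxd).trans_lt hd
  obtain ⟨i₀, j₀, hij⟩ : ∃ i j, (x ^ (c - 1)) i j ≠ 0 := by
    by_contra! h
    exact pow_pred_nilpotencyClass hx (Matrix.ext h)
  obtain ⟨w, hw0, hw⟩ := exists_ne_zero_forall_pow_mulVec_apply_eq_zero x i₀ hcd
  -- all `geomSumRankOne x c i₀ u` kill `w ≠ 0`, while nonzero multiples of `1` do not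
  let B : (ι → ℂ) × ℂ →ₗ[ℂ] Matrix ι ι ℂ :=
    (geomSumRankOne x c i₀).coprod (LinearMap.toSpanSingleton ℂ _ 1)
  have hB : LinearMap.range B ≤ matCentralizer x := by
    rintro _ ⟨⟨u, a⟩, rfl⟩
    exact add_mem (commute_geomSumRankOne (pow_nilpotencyClass hx) i₀ u).eq
      (Submodule.smul_mem _ a (Commute.one_right x).eq)
  have hB_inj : Function.Injective B := by
    rw [← LinearMap.ker_eq_bot, LinearMap.ker_eq_bot']
    rintro ⟨u, a⟩ h
    have hkill : geomSumRankOne x c i₀ u *ᵥ w = 0 := by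
      rw [geomSumRankOne_mulVec]
      exact sum_eq_zero fun i hi => by rw [hw _ (by grind), zero_smul]
    obtain rfl : a = 0 := by
      simpa [B, Matrix.add_mulVec, hkill, Matrix.smul_mulVec, hw0] using congrArg (· *ᵥ w) h
    simp only [B, LinearMap.coprod_apply, map_zero, add_zero] at h
    simp [geomSumRankOne_injective hx (pos_nilpotencyClass_iff.2 hx).ne' hij
      (h.trans (map_zero _).symm)]
  calc Fintype.card ι < Module.finrank ℂ (LinearMap.range B) := by
        rw [LinearMap.finrank_range_of_inj hB_inj]; simp
    _ ≤ _ := Submodule.finrank_mono hB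

variable {v : ι → ℂ}

theorem span_range_pow_mulVec_eq_top (hx : x ^ Fintype.card ι = 0)
    (hv : x ^ (Fintype.card ι - 1) *ᵥ v ≠ 0) :
    Submodule.span ℂ (Set.range fun k : Fin (Fintype.card ι) => x ^ (k : ℕ) *ᵥ v) = ⊤ :=
  (linearIndependent_pow_mulVec hx hv).span_eq_top_of_card_eq_finrank' (by simp)

theorem eq_zero_of_commute_of_mulVec_eq_zero (hx : x ^ Fintype.card ι = 0)
    (hv : x ^ (Fintype.card ι - 1) *ᵥ v ≠ 0) {y : Matrix ι ι ℂ} (hxy : Commute x y)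
    (hyv : y *ᵥ v = 0) : y = 0 := by
  refine Matrix.toLin'.injective (LinearMap.ext_on_range (span_range_pow_mulVec_eq_top hx hv)
    fun k => ?_)
  simp only [Matrix.toLin'_apply, Matrix.zero_mulVec]
  rw [Matrix.mulVec_mulVec, ← (hxy.pow_left k).eq, ← Matrix.mulVec_mulVec, hyv,
    Matrix.mulVec_zero]

theorem finrank_matCentralizer_eq_card (hx : x ^ Fintype.card ι = 0)
    (hv : x ^ (Fintype.card ι - 1) *ᵥ v ≠ 0) :
    Module.finrank ℂ (matCentralizer x) = Fintype.card ι := by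
  let ev : matCentralizer x →ₗ[ℂ] ι → ℂ :=
    LinearMap.applyₗ v ∘ₗ Matrix.toLin'.toLinearMap ∘ₗ (matCentralizer x).subtype
  apply le_antisymm
  · have hinj : Function.Injective ev := by
      rw [← LinearMap.ker_eq_bot, LinearMap.ker_eq_bot']
      exact fun y hy => Subtype.ext (eq_zero_of_commute_of_mulVec_eq_zero hx hv y.2 hy)
    simpa using LinearMap.finrank_le_finrank_of_injective hinj
  · let pows (k : Fin (Fintype.card ι)) : matCentralizer x :=
      ⟨x ^ (k : ℕ), (Commute.self_pow x k : _)⟩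
    have hpows : LinearIndependent ℂ pows := .of_comp ev (linearIndependent_pow_mulVec hx hv)
    simpa using hpows.fintype_card_le_finrank

end Centralizer

theorem mulVec_single_one_ne_zero {R ι : Type*} [Semiring R] [Fintype ι] [DecidableEq ι]
    {M : Matrix ι ι R} {i j : ι} (h : M i j ≠ 0) : M *ᵥ Pi.single j 1 ≠ 0 :=
  fun h' => h (by simpa [Matrix.mulVec_single_one] using congrFun h' i)

section StrictlyUpper

variable {R : Type*} [Semiring R] {m : ℕ}

theorem pow_apply_eq_zero_of_lt {x : Matrix (Fin m) (Fin m) R}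
    (hx : ∀ i j : Fin m, (j : ℕ) ≤ i → x i j = 0) (k : ℕ) :
    ∀ i j : Fin m, (j : ℕ) < i + k → (x ^ k) i j = 0 := by
  induction k with
  | zero => exact fun i j h => Matrix.one_apply_ne (by rintro rfl; omega)
  | succ k ih =>
    intro i j h
    rw [pow_succ', Matrix.mul_apply]
    refine sum_eq_zero fun l _ => ?_
    rcases le_or_gt (l : ℕ) i with hl | hl
    · rw [hx i l hl, zero_mul]
    · rw [ih l j (by omega), mul_zero]

theorem pow_eq_zero_of_strictUpper {x : Matrix (Fin m) (Fin m) R}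
    (hx : ∀ i j : Fin m, (j : ℕ) ≤ i → x i j = 0) : x ^ m = 0 :=
  Matrix.ext fun i j => pow_apply_eq_zero_of_lt hx m i j (by omega)

theorem pow_eq_zero_of_apply_zero_last {x : Matrix (Fin (m + 1)) (Fin (m + 1)) R}
    (hx : ∀ i j : Fin (m + 1), (j : ℕ) ≤ i → x i j = 0) (h : (x ^ m) 0 (Fin.last m) = 0) :
    x ^ m = 0 := by
  ext i j
  by_cases hij : (j : ℕ) < i + m
  · exact pow_apply_eq_zero_of_lt hx m i j hij
  · obtain rfl : i = 0 := Fin.ext (by rw [Fin.val_zero]; omega)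
    obtain rfl : j = Fin.last m := Fin.ext (by simp; omega)
    exact h

theorem pow_succ_apply_zero_last {x : Matrix (Fin (m + 2)) (Fin (m + 2)) R}
    (hx : ∀ i j : Fin (m + 2), (j : ℕ) ≤ i → x i j = 0) :
    (x ^ (m + 1)) 0 (Fin.last (m + 1)) =
      (x ^ m) 0 (Fin.last m).castSucc * x (Fin.last m).castSucc (Fin.last (m + 1)) := by
  rw [pow_succ, Matrix.mul_apply, Fintype.sum_eq_single (Fin.last m).castSucc]
  intro l hl
  rcases lt_or_gt_of_ne (Fin.val_ne_of_ne hl) with h | h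
  · rw [pow_apply_eq_zero_of_lt hx m 0 l (by simpa using h), zero_mul]
  · rw [hx l (Fin.last (m + 1)) (by simp at h ⊢; omega), mul_zero]

end StrictlyUpper

theorem ulCorner_apply {n : ℕ} (A : Matrix (Fin (n + 1)) (Fin (n + 1)) ℂ) (i j : Fin n) :
    ulCorner (Nat.le_succ n) A i j = A i.castSucc j.castSucc :=
  rfl

theorem ulCorner_mul {n : ℕ} (A B : Matrix (Fin (n + 1)) (Fin (n + 1)) ℂ)
    (hB : ∀ j : Fin n, B (Fin.last n) j.castSucc = 0) :
    ulCorner (Nat.le_succ n) (A * B) =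
      ulCorner (Nat.le_succ n) A * ulCorner (Nat.le_succ n) B := by
  ext i j
  simp [ulCorner_apply, Matrix.mul_apply, Fin.sum_univ_castSucc, hB]

theorem ulCorner_pow {n : ℕ} {x : Matrix (Fin (n + 1)) (Fin (n + 1)) ℂ}
    (hx : ∀ j : Fin n, x (Fin.last n) j.castSucc = 0) (k : ℕ) :
    ulCorner (Nat.le_succ n) (x ^ k) = ulCorner (Nat.le_succ n) x ^ k := by
  induction k with
  | zero => ext i j; simp [ulCorner_apply, Matrix.one_apply]
  | succ k ih => rw [pow_succ, ulCorner_mul _ _ hx, ih, pow_succ]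

theorem ulCorner_matEmbed {n : ℕ} (z : Matrix (Fin n) (Fin n) ℂ) :
    ulCorner (Nat.le_succ n) (matEmbed z) = z := by
  ext i j
  simp [ulCorner_apply, matEmbed]

theorem matEmbed_mulVec_single_last {n : ℕ} (z : Matrix (Fin n) (Fin n) ℂ) :
    matEmbed z *ᵥ Pi.single (Fin.last n) 1 = 0 := by
  ext i
  simp [matEmbed]

theorem stmt15_general (n : ℕ) (x : Matrix (Fin (n + 1)) (Fin (n + 1)) ℂ)
    (hupper : ∀ i j : Fin (n + 1), (j : ℕ) ≤ (i : ℕ) → x i j = 0)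
    (hreg : Module.finrank ℂ (matCentralizer x) = n + 1) :
    IsNilpotent (ulCorner (Nat.le_succ n) x) ∧
    Module.finrank ℂ (matCentralizer (ulCorner (Nat.le_succ n) x)) = n ∧
    ∀ z : Matrix (Fin n) (Fin n) ℂ,
      z * ulCorner (Nat.le_succ n) x = ulCorner (Nat.le_succ n) x * z →
      matEmbed z * x = x * matEmbed z →
      z = 0 := by
  set y := ulCorner (Nat.le_succ n) x
  have hy : ∀ i j : Fin n, (j : ℕ) ≤ i → y i j = 0 := fun i j h => hupper _ _ h
  have hxn : x ^ n ≠ 0 := fun h =>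
    (card_lt_finrank_matCentralizer h (by simp)).ne' (by simpa using hreg)
  have hx0 : (x ^ n) 0 (Fin.last n) ≠ 0 := fun h => hxn (pow_eq_zero_of_apply_zero_last hupper h)
  refine ⟨⟨n, pow_eq_zero_of_strictUpper hy⟩, ?_, fun z _ hzx => ?_⟩
  · cases n with
    | zero => exact Module.finrank_zero_of_subsingleton
    | succ n =>
      have hy0 : (y ^ n) 0 (Fin.last n) ≠ 0 := by
        rw [← ulCorner_pow (fun j => hupper _ _ (by simp)), ulCorner_apply]
        exact left_ne_zero_of_mul (pow_succ_apply_zero_last hupper ▸ hx0)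
      simpa using finrank_matCentralizer_eq_card (v := Pi.single (Fin.last n) 1)
        (by simpa using pow_eq_zero_of_strictUpper hy)
        (by simpa using mulVec_single_one_ne_zero hy0)
  · have hZ : matEmbed z = 0 :=
      eq_zero_of_commute_of_mulVec_eq_zero (v := Pi.single (Fin.last n) 1)
        (by simpa using pow_eq_zero_of_strictUpper hupper)
        (by simpa using mulVec_single_one_ne_zero hx0) hzx.symm (matEmbed_mulVec_single_last z)
    rw [← ulCorner_matEmbed z, hZ]
    rfl

/-- Let `x ∈ gl(n+1,ℂ)` be a regular nilpotent element contained in the upper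
triangular Borel subalgebra `b₊` (so `x` is strictly upper triangular, nilpotent
and its centralizer has dimension `n+1`).  Then the corner `xₙ ∈ gl(n,ℂ)` is
regular nilpotent and `z_{gl(n)}(xₙ) ∩ z_{gl(n+1)}(x) = 0`. -/
theorem stmt15 (n : ℕ) (x : Matrix (Fin (n + 1)) (Fin (n + 1)) ℂ)
    (hupper : ∀ i j : Fin (n + 1), (j : ℕ) ≤ (i : ℕ) → x i j = 0)
    (hnil : IsNilpotent x)
    (hreg : Module.finrank ℂ (matCentralizer x) = n + 1) :
    IsNilpotent (ulCorner (Nat.le_succ n) x) ∧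
    Module.finrank ℂ (matCentralizer (ulCorner (Nat.le_succ n) x)) = n ∧
    ∀ z : Matrix (Fin n) (Fin n) ℂ,
      z * ulCorner (Nat.le_succ n) x = ulCorner (Nat.le_succ n) x * z →
      matEmbed z * x = x * matEmbed z →
      z = 0 :=
  stmt15_general n x hupper hreg
end
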